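/- Let G=(V,E) be a general dissimilarity graph containing at least one unbalanced cycle, so that δ(G)>0, and fix an arbitrary orientation (α,β) for each edge of E. Fix an edge e=(s,t), and let X = { f=(α,β)∈E : w(f) = d(α,s) + w(e) + d(t,β) + δ(G) } and Y = { f=(α,β)∈E : w(f) = d(β,s) + w(e) + d(t,α) + δ(G) }. Then N_U(e,δ(G)) = Σ_{(α,β)∈X} csp(α,s)·csp(t,β) + Σ_{(α,β)∈Y} csp(β,s)·csp(t,α). -/

import Mathlib

open SimpleGraph

noncomputable section

variable {V : Type*}

/-- The length of a walk: the sum of the weights of its edges. -/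
def wlen {G : SimpleGraph V} (w : Sym2 V → ℝ) {u v : V} (p : G.Walk u v) : ℝ :=
  (p.edges.map w).sum

/-- The shortest-path distance between two vertices: the minimum length of a path. -/
def spDist (G : SimpleGraph V) (w : Sym2 V → ℝ) (u v : V) : ℝ :=
  sInf {x : ℝ | ∃ p : G.Walk u v, p.IsPath ∧ wlen w p = x}

/-- The number of distinct shortest paths from `u` to `v`. -/
def csp (G : SimpleGraph V) (w : Sym2 V → ℝ) (u v : V) : ℕ :=
  Nat.card {p : G.Walk u v // p.IsPath ∧ wlen w p = spDist G w u v}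

/-- `c` is the edge set of some cycle of `G`.  (A cycle is determined, up to
rotation and reflection, by its edge set.) -/
def IsCycleSet [DecidableEq V] (G : SimpleGraph V) (c : Finset (Sym2 V)) : Prop :=
  ∃ (v : V) (p : G.Walk v v), p.IsCycle ∧ p.edges.toFinset = c

/-- `e` is a top edge of the cycle with edge set `c`: it lies in `c` and its
weight strictly exceeds the sum of the weights of all the other edges of `c`. -/
def TopOfSet [DecidableEq V] (w : Sym2 V → ℝ) (c : Finset (Sym2 V)) (e : Sym2 V) : Prop :=
  e ∈ c ∧ ∑ f ∈ c.erase e, w f < w e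

/-- A cycle is unbalanced if it has a top edge. -/
def UnbalancedSet [DecidableEq V] (w : Sym2 V → ℝ) (c : Finset (Sym2 V)) : Prop :=
  ∃ e, TopOfSet w c e

/-- `S` contains at least one edge of every unbalanced cycle. -/
def RegularCoverSet [DecidableEq V] (G : SimpleGraph V) (w : Sym2 V → ℝ)
    (S : Set (Sym2 V)) : Prop :=
  ∀ c : Finset (Sym2 V), IsCycleSet G c → UnbalancedSet w c → ∃ e ∈ c, e ∈ S

/-- `S` contains at least one non-top edge of every unbalanced cycle. -/
def NonTopCoverSet [DecidableEq V] (G : SimpleGraph V) (w : Sym2 V → ℝ)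
    (S : Set (Sym2 V)) : Prop :=
  ∀ c : Finset (Sym2 V), IsCycleSet G c → UnbalancedSet w c →
    ∃ e ∈ c, e ∈ S ∧ ¬ TopOfSet w c e

/-- The deficit of a cycle with edge set `c`: the largest edge weight minus the
sum of the weights of all the other edges. -/
def deficitSet (w : Sym2 V → ℝ) (c : Finset (Sym2 V)) : ℝ :=
  2 * sSup (w '' (c : Set (Sym2 V))) - ∑ f ∈ c, w f

/-- `δ(G)`: the maximum deficit over all cycles of `G`. -/
def deltaG [DecidableEq V] (G : SimpleGraph V) (w : Sym2 V → ℝ) : ℝ :=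
  sSup {x : ℝ | ∃ c : Finset (Sym2 V), IsCycleSet G c ∧ deficitSet w c = x}

/-- `N_T(e, a)`: the number of distinct unbalanced cycles of deficit `a`
whose top edge is `e`. -/
def NT [DecidableEq V] (G : SimpleGraph V) (w : Sym2 V → ℝ) (e : Sym2 V) (a : ℝ) : ℕ :=
  Nat.card {c : Finset (Sym2 V) // IsCycleSet G c ∧ TopOfSet w c e ∧ deficitSet w c = a}

/-- `N_U(e, a)`: the number of distinct unbalanced cycles of deficit `a`
containing `e` as a non-top edge. -/
def NU [DecidableEq V] (G : SimpleGraph V) (w : Sym2 V → ℝ) (e : Sym2 V) (a : ℝ) : ℕ :=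
  Nat.card {c : Finset (Sym2 V) // IsCycleSet G c ∧ UnbalancedSet w c ∧
    e ∈ c ∧ ¬ TopOfSet w c e ∧ deficitSet w c = a}

/-!
Write `e = s(s, t)` and `δ = δ(G) > 0`. If an oriented edge `(a, b)` satisfies
`w s(a, b) = d(a, s) + w e + d(t, b) + δ`, then for shortest paths `Q : a ⇝ s` and `R : t ⇝ b`
the walk `Q e R` is a path: a vertex shared by `Q` and `R` would give an `a`–`b` walk shorter
than `w s(a, b) - δ`, and closing a shortest such walk by `s(a, b)` would give a cycle of deficit
larger than `δ`. Adding `s(a, b)` to `Q e R` gives an unbalanced cycle with top edge `s(a, b)`,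
deficit `δ` and `e` as a non-top edge. Conversely, cutting such a cycle at its top edge leaves a
path through `e` of length `w s(a, b) - δ`, and since no `a`–`b` walk is shorter, both of its
pieces on either side of `e` are shortest paths. Hence these cycles are in bijection with the
triples `((a, b), Q, R)`, and the orientation `o` splits the oriented edges into the sums over
`X` and `Y`.
-/

section Walks

variable {G : SimpleGraph V} {w : Sym2 V → ℝ}

@[simp] lemma wlen_cons {u v x : V} (h : G.Adj u v) (p : G.Walk v x) :
    wlen w (Walk.cons h p) = w s(u, v) + wlen w p := by simp [wlen]

@[simp] lemma wlen_append {u v x : V} (p : G.Walk u v) (q : G.Walk v x) :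
    wlen w (p.append q) = wlen w p + wlen w q := by simp [wlen]

lemma wlen_nonneg (hw : ∀ e ∈ G.edgeSet, 0 < w e) {u v : V} (p : G.Walk u v) :
    0 ≤ wlen w p :=
  List.sum_nonneg fun _ hx ↦ by
    obtain ⟨f, hf, rfl⟩ := List.mem_map.mp hx
    exact (hw f (p.edges_subset_edgeSet hf)).le

lemma le_wlen_of_mem_edges (hw : ∀ e ∈ G.edgeSet, 0 < w e) {u v : V} {p : G.Walk u v}
    {f : Sym2 V} (hf : f ∈ p.edges) : w f ≤ wlen w p := by
  induction p with
  | nil => simp at hf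
  | cons h q ih =>
    rw [Walk.edges_cons, List.mem_cons] at hf
    have hq := wlen_nonneg hw q
    have hh := hw _ (G.mem_edgeSet.mpr h)
    rw [wlen_cons]
    rcases hf with rfl | hf
    · linarith
    · linarith [ih hf]

lemma notMem_edges_of_wlen_lt (hw : ∀ e ∈ G.edgeSet, 0 < w e) {u v : V} {p : G.Walk u v}
    {f : Sym2 V} (hlt : wlen w p < w f) : f ∉ p.edges :=
  fun hf ↦ (le_wlen_of_mem_edges hw hf).not_gt hlt

variable [DecidableEq V]

lemma sum_edges_toFinset_le_wlen (hw : ∀ e ∈ G.edgeSet, 0 < w e) {u v : V} (p : G.Walk u v) :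
    ∑ f ∈ p.edges.toFinset, w f ≤ wlen w p := by
  rw [wlen, Finset.sum_list_map_count]
  refine Finset.sum_le_sum fun f hf ↦ ?_
  have hcount : 1 ≤ p.edges.count f := List.count_pos_iff.mpr (List.mem_toFinset.mp hf)
  have hf0 : 0 ≤ w f := (hw f (p.edges_subset_edgeSet (List.mem_toFinset.mp hf))).le
  simpa using mul_le_mul_of_nonneg_right (Nat.one_le_cast.mpr hcount : (1 : ℝ) ≤ _) hf0

lemma SimpleGraph.Walk.IsTrail.sum_edges_toFinset_eq_wlen {u v : V} {p : G.Walk u v}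
    (hp : p.IsTrail) :
    ∑ f ∈ p.edges.toFinset, w f = wlen w p := by
  rw [wlen, ← List.sum_toFinset _ hp.edges_nodup]

end Walks

section ShortestPaths

variable [Fintype V] [DecidableEq V] {G : SimpleGraph V} [DecidableRel G.Adj] {w : Sym2 V → ℝ}

lemma finite_setOf_wlen_isPath (u v : V) :
    {x : ℝ | ∃ p : G.Walk u v, p.IsPath ∧ wlen w p = x}.Finite := by
  refine (Set.finite_range fun p : G.Path u v ↦ wlen w p.1).subset ?_
  rintro _ ⟨p, hp, rfl⟩
  exact ⟨⟨p, hp⟩, rfl⟩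

lemma spDist_le_wlen_of_isPath {u v : V} {p : G.Walk u v} (hp : p.IsPath) :
    spDist G w u v ≤ wlen w p :=
  csInf_le (finite_setOf_wlen_isPath u v).bddBelow ⟨p, hp, rfl⟩

lemma exists_isPath_wlen_eq_spDist (hconn : G.Connected) (u v : V) :
    ∃ p : G.Walk u v, p.IsPath ∧ wlen w p = spDist G w u v := by
  obtain ⟨q⟩ := hconn.preconnected u v
  have hne : {x : ℝ | ∃ p : G.Walk u v, p.IsPath ∧ wlen w p = x}.Nonempty :=
    ⟨_, q.bypass, q.bypass_isPath, rfl⟩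
  exact hne.csInf_mem (finite_setOf_wlen_isPath u v)

lemma spDist_le_wlen (hw : ∀ e ∈ G.edgeSet, 0 < w e) {u v : V}
    (p : G.Walk u v) : spDist G w u v ≤ wlen w p :=
  calc spDist G w u v ≤ wlen w p.bypass := spDist_le_wlen_of_isPath p.bypass_isPath
    _ = ∑ f ∈ p.bypass.edges.toFinset, w f :=
        p.bypass_isPath.isTrail.sum_edges_toFinset_eq_wlen.symm
    _ ≤ ∑ f ∈ p.edges.toFinset, w f :=
        Finset.sum_le_sum_of_subset_of_nonneg
          (fun _ hx ↦ List.mem_toFinset.mpr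
            (p.edges_bypass_subset_edges (List.mem_toFinset.mp hx)))
          (fun f hf _ ↦ (hw f (p.edges_subset_edgeSet (List.mem_toFinset.mp hf))).le)
    _ ≤ wlen w p := sum_edges_toFinset_le_wlen hw p

end ShortestPaths

namespace SimpleGraph.Walk

variable {G : SimpleGraph V}

lemma IsPath.eq_cons_of_mem_edges {u v : V} {r : G.Walk u v} (hr : r.IsPath) {x : V}
    (hf : s(u, x) ∈ r.edges) : ∃ (h : G.Adj u x) (r' : G.Walk x v), r = cons h r' := by
  cases r with
  | nil => simp at hf
  | @cons _ y _ h q =>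
    rw [edges_cons, List.mem_cons] at hf
    rcases hf with hf | hf
    · obtain rfl : x = y := Sym2.congr_right.mp hf
      exact ⟨h, q, rfl⟩
    · exact absurd (q.fst_mem_support_of_mem_edges hf) ((cons_isPath_iff h q).mp hr).2

lemma IsPath.eq_of_edges_subset {u v : V} {p q : G.Walk u v} (hp : p.IsPath) (hq : q.IsPath)
    (hsub : p.edges ⊆ q.edges) : p = q := by
  induction p with
  | nil => exact (eq_nil_iff_nil.mpr (isPath_iff_nil.mp hq)).symm
  | @cons u y v h p ih =>
    obtain ⟨h', q', rfl⟩ := hq.eq_cons_of_mem_edges (x := y) (hsub (by simp))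
    have hu : u ∉ p.support := ((cons_isPath_iff h p).mp hp).2
    refine congrArg _ (ih hp.of_cons hq.of_cons fun f hf ↦ ?_)
    rcases List.mem_cons.mp (hsub (List.mem_cons_of_mem _ hf)) with rfl | hf'
    · exact absurd (p.fst_mem_support_of_mem_edges hf) hu
    · exact hf'

lemma exists_eq_append_cons_of_mk_mem_edges {u v x y : V} (p : G.Walk u v)
    (h : s(x, y) ∈ p.edges) :
    (∃ (hxy : G.Adj x y) (Q : G.Walk u x) (R : G.Walk y v), p = Q.append (cons hxy R)) ∨
    (∃ (hyx : G.Adj y x) (Q : G.Walk u y) (R : G.Walk x v), p = Q.append (cons hyx R)) := by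
  induction p with
  | nil => simp at h
  | @cons a b c hab q ih =>
    rcases List.mem_cons.mp h with heq | hmem
    · rcases Sym2.eq_iff.mp heq with ⟨rfl, rfl⟩ | ⟨rfl, rfl⟩
      · exact Or.inl ⟨hab, nil, q, rfl⟩
      · exact Or.inr ⟨hab, nil, q, rfl⟩
    · rcases ih hmem with ⟨hxy, Q, R, rfl⟩ | ⟨hyx, Q, R, rfl⟩
      · exact Or.inl ⟨hxy, cons hab Q, R, rfl⟩
      · exact Or.inr ⟨hyx, cons hab Q, R, rfl⟩

lemma append_cons_inj_of_isPath {u v x y : V} {h : G.Adj x y} {Q Q' : G.Walk u x}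
    {R R' : G.Walk y v} (hp : (Q.append (cons h R)).IsPath)
    (heq : Q.append (cons h R) = Q'.append (cons h R')) : Q = Q' ∧ R = R' := by
  induction Q with
  | nil =>
    obtain rfl : Q' = nil := eq_nil_iff_nil.mpr (isPath_iff_nil.mp (heq ▸ hp).of_append_left)
    exact ⟨rfl, by simpa using heq⟩
  | @cons u z _ hadj q ih =>
    cases Q' with
    | nil => simpa using (hp.of_append_left : (cons hadj q).IsPath)
    | cons hadj' q' =>
      simp only [cons_append, cons.injEq] at heq
      obtain ⟨rfl, heq⟩ := heq
      obtain ⟨rfl, rfl⟩ := ih hp.of_cons (eq_of_heq heq)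
      exact ⟨rfl, rfl⟩

@[simp] lemma support_append_cons {u v x y : V} (h : G.Adj x y) (Q : G.Walk u x)
    (R : G.Walk y v) : (Q.append (cons h R)).support = Q.support ++ R.support := by
  simp [support_append]

lemma IsPath.append_cons {u v x y : V} {Q : G.Walk u x} {R : G.Walk y v} (hQ : Q.IsPath)
    (hR : R.IsPath) (hd : Q.support.Disjoint R.support) (h : G.Adj x y) :
    (Q.append (cons h R)).IsPath := by
  rw [isPath_def, support_append_cons]
  exact hQ.support_nodup.append hR.support_nodup hd

lemma IsTrail.dart_symm_notMem_darts {u v : V} {p : G.Walk u v} (hp : p.IsTrail) {d : G.Dart}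
    (hd : d ∈ p.darts) : d.symm ∉ p.darts :=
  fun hd' ↦ d.symm_ne (List.inj_on_of_nodup_map hp.edges_nodup hd' hd d.edge_symm)

lemma IsCycle.isPath_append_of_append_cons {v x y : V} {h : G.Adj x y} {Q : G.Walk v x}
    {R : G.Walk y v} (hc : (Q.append (cons h R)).IsCycle) :
    (R.append Q).IsPath ∧ s(x, y) ∉ (R.append Q).edges := by
  have hsupp := hc.support_nodup
  have hedges := hc.edges_nodup
  rw [support_append_cons, List.tail_append_of_ne_nil Q.support_ne_nil] at hsupp
  rw [edges_append, edges_cons, List.nodup_middle, List.nodup_cons, List.nodup_append_comm]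
    at hedges
  refine ⟨?_, ?_⟩
  · rw [isPath_def, support_append]
    exact List.nodup_append_comm.mp hsupp
  · rw [edges_append, List.mem_append, or_comm, ← List.mem_append]
    exact hedges.1

variable [DecidableEq V]

lemma IsPath.exists_append_cons {α β s t : V} (hst : G.Adj s t)
    {P : G.Walk α β} (hP : P.IsPath) (he : s(s, t) ∈ P.edges) :
    ∃ (a b : V) (Q : G.Walk a s) (R : G.Walk t b), s(a, b) = s(α, β) ∧
      (Q.append (cons hst R)).IsPath ∧
      (Q.append (cons hst R)).edges.toFinset = P.edges.toFinset := by
  rcases P.exists_eq_append_cons_of_mk_mem_edges he with ⟨h, Q, R, rfl⟩ | ⟨h, Q, R, rfl⟩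
  · exact ⟨α, β, Q, R, rfl, hP, rfl⟩
  · have hrev :
        (Q.append (cons h R)).reverse = R.reverse.append (cons hst Q.reverse) := by
      rw [reverse_append, reverse_cons, ← append_assoc, cons_nil_append]
    refine ⟨β, α, R.reverse, Q.reverse, Sym2.eq_swap, hrev ▸ hP.reverse, ?_⟩
    rw [← hrev, edges_reverse, List.toFinset_reverse]

lemma edges_toFinset_append_cons_ne {a b s t : V} (hst : G.Adj s t)
    {Q : G.Walk a s} {R : G.Walk t b} {Q' : G.Walk b s} {R' : G.Walk t a}
    (hW : (Q.append (cons hst R)).IsPath) (hW' : (Q'.append (cons hst R')).IsPath) :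
    (Q.append (cons hst R)).edges.toFinset ≠
      (Q'.append (cons hst R')).edges.toFinset := by
  intro h
  have hrev : (Q'.append (cons hst R')).reverse = Q.append (cons hst R) :=
    hW'.reverse.eq_of_edges_subset hW fun f hf ↦ by
      rw [edges_reverse, List.mem_reverse] at hf
      exact List.mem_toFinset.mp (h ▸ List.mem_toFinset.mpr hf)
  have hd : (⟨(s, t), hst⟩ : G.Dart) ∈ (Q.append (cons hst R)).darts := by simp
  refine hW.isTrail.dart_symm_notMem_darts hd ?_
  rw [← hrev, mem_darts_reverse]
  simp

end SimpleGraph.Walk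

section Cycles

variable [DecidableEq V] {G : SimpleGraph V} {w : Sym2 V → ℝ}

lemma IsCycleSet.subset_edgeSet {c : Finset (Sym2 V)} (hc : IsCycleSet G c) :
    ∀ f ∈ c, f ∈ G.edgeSet := by
  obtain ⟨v, p, -, rfl⟩ := hc
  exact fun f hf ↦ p.edges_subset_edgeSet (List.mem_toFinset.mp hf)

lemma IsCycleSet.weight_nonneg (hw : ∀ e ∈ G.edgeSet, 0 < w e) {c : Finset (Sym2 V)}
    (hc : IsCycleSet G c) : ∀ f ∈ c, 0 ≤ w f :=
  fun f hf ↦ (hw f (hc.subset_edgeSet f hf)).le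

lemma isCycleSet_insert_of_isPath {a b : V} (hab : G.Adj a b) {W : G.Walk a b}
    (hW : W.IsPath) (hf : s(a, b) ∉ W.edges) :
    IsCycleSet G (insert s(a, b) W.edges.toFinset) := by
  refine ⟨b, Walk.cons hab.symm W, (Walk.cons_isCycle_iff W hab.symm).mpr ⟨hW, ?_⟩, ?_⟩
  · rwa [Sym2.eq_swap]
  · rw [Walk.edges_cons, List.toFinset_cons, Sym2.eq_swap]

lemma sum_erase_insert_edges_eq_wlen {a b : V} {W : G.Walk a b} (hW : W.IsTrail) {f : Sym2 V}
    (hf : f ∉ W.edges) : ∑ g ∈ (insert f W.edges.toFinset).erase f, w g = wlen w W := by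
  rw [Finset.erase_insert (mt List.mem_toFinset.mp hf), hW.sum_edges_toFinset_eq_wlen]

lemma TopOfSet.weight_le {c : Finset (Sym2 V)} (hc : ∀ g ∈ c, 0 ≤ w g) {f : Sym2 V}
    (ht : TopOfSet w c f) {g : Sym2 V} (hg : g ∈ c) : w g ≤ w f := by
  by_cases hgf : g = f
  · rw [hgf]
  · have := Finset.single_le_sum (fun x hx ↦ hc x (Finset.mem_of_mem_erase hx))
      (Finset.mem_erase.mpr ⟨hgf, hg⟩)
    linarith [ht.2]

lemma TopOfSet.deficitSet_eq {c : Finset (Sym2 V)} (hc : ∀ g ∈ c, 0 ≤ w g) {f : Sym2 V}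
    (ht : TopOfSet w c f) :
    deficitSet w c = w f - ∑ g ∈ c.erase f, w g := by
  have hsup : sSup (w '' (c : Set (Sym2 V))) = w f :=
    le_antisymm
      (csSup_le ⟨w f, f, ht.1, rfl⟩ (by rintro _ ⟨g, hg, rfl⟩; exact ht.weight_le hc hg))
      (le_csSup (c.finite_toSet.image w).bddAbove ⟨f, ht.1, rfl⟩)
  rw [deficitSet, hsup, ← Finset.add_sum_erase _ w ht.1]
  ring

lemma TopOfSet.eq {c : Finset (Sym2 V)} (hc : ∀ g ∈ c, 0 ≤ w g) {f g : Sym2 V}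
    (hf : TopOfSet w c f) (hg : TopOfSet w c g) : f = g := by
  by_contra hne
  have hgf := hg.weight_le hc hf.1
  have hfg := hf.weight_le hc hg.1
  have := Finset.single_le_sum (fun x hx ↦ hc x (Finset.mem_of_mem_erase hx))
    (Finset.mem_erase.mpr ⟨Ne.symm hne, hg.1⟩)
  linarith [hf.2]

lemma topOfSet_insert_of_wlen_lt (hw : ∀ e ∈ G.edgeSet, 0 < w e) {a b : V} {W : G.Walk a b}
    (hW : W.IsTrail) (hlt : wlen w W < w s(a, b)) :
    TopOfSet w (insert s(a, b) W.edges.toFinset) s(a, b) :=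
  ⟨Finset.mem_insert_self _ _,
    by rwa [sum_erase_insert_edges_eq_wlen hW (notMem_edges_of_wlen_lt hw hlt)]⟩

lemma deficitSet_insert_of_wlen_lt (hw : ∀ e ∈ G.edgeSet, 0 < w e) {a b : V} (hab : G.Adj a b)
    {W : G.Walk a b} (hW : W.IsPath) (hlt : wlen w W < w s(a, b)) :
    deficitSet w (insert s(a, b) W.edges.toFinset) = w s(a, b) - wlen w W := by
  have hf := notMem_edges_of_wlen_lt hw hlt
  have hc := (isCycleSet_insert_of_isPath hab hW hf).weight_nonneg hw
  rw [(topOfSet_insert_of_wlen_lt hw hW.isTrail hlt).deficitSet_eq hc,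
    sum_erase_insert_edges_eq_wlen hW.isTrail hf]

def IsNUCycle (G : SimpleGraph V) (w : Sym2 V → ℝ) (e : Sym2 V) (a : ℝ)
    (c : Finset (Sym2 V)) : Prop :=
  IsCycleSet G c ∧ UnbalancedSet w c ∧ e ∈ c ∧ ¬ TopOfSet w c e ∧ deficitSet w c = a

lemma isNUCycle_insert_of_isPath (hw : ∀ e ∈ G.edgeSet, 0 < w e) {δ : ℝ} (hδ : 0 < δ)
    {a b : V} (hab : G.Adj a b) {W : G.Walk a b} (hW : W.IsPath) {e : Sym2 V}
    (he : e ∈ W.edges) (hlen : w s(a, b) = wlen w W + δ) :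
    IsNUCycle G w e δ (insert s(a, b) W.edges.toFinset) := by
  have hlt : wlen w W < w s(a, b) := by linarith
  have hf := notMem_edges_of_wlen_lt hw hlt
  have hcyc := isCycleSet_insert_of_isPath hab hW hf
  have htop := topOfSet_insert_of_wlen_lt hw hW.isTrail hlt
  refine ⟨hcyc, ⟨_, htop⟩, Finset.mem_insert_of_mem (List.mem_toFinset.mpr he),
    fun hte ↦ ?_, ?_⟩
  · exact hf (htop.eq (hcyc.weight_nonneg hw) hte ▸ he)
  · rw [deficitSet_insert_of_wlen_lt hw hab hW hlt]
    linarith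

lemma IsCycleSet.exists_isPath_insert_eq {c : Finset (Sym2 V)} (hc : IsCycleSet G c) {α β : V}
    (hf : s(α, β) ∈ c) :
    ∃ P : G.Walk α β, P.IsPath ∧ s(α, β) ∉ P.edges ∧
      insert s(α, β) P.edges.toFinset = c := by
  obtain ⟨v, p, hp, rfl⟩ := hc
  rcases p.exists_eq_append_cons_of_mk_mem_edges (List.mem_toFinset.mp hf) with
    ⟨h, Q, R, rfl⟩ | ⟨h, Q, R, rfl⟩
  · obtain ⟨hP, hfP⟩ := hp.isPath_append_of_append_cons
    refine ⟨(R.append Q).reverse, hP.reverse, by simpa [and_comm] using hfP, ?_⟩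
    ext f
    simp [or_comm]
  · obtain ⟨hP, hfP⟩ := hp.isPath_append_of_append_cons
    refine ⟨R.append Q, hP, by rwa [Sym2.eq_swap], ?_⟩
    ext f
    simp [Sym2.eq_swap, or_comm]

variable [Fintype V]

lemma deficitSet_le_deltaG {c : Finset (Sym2 V)} (hc : IsCycleSet G c) :
    deficitSet w c ≤ deltaG G w := by
  have hbdd : BddAbove {x : ℝ | ∃ c, IsCycleSet G c ∧ deficitSet w c = x} :=
    ((Set.finite_range (deficitSet w)).subset
      (by rintro _ ⟨c, -, rfl⟩; exact ⟨c, rfl⟩)).bddAbove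
  exact le_csSup hbdd ⟨c, hc, rfl⟩

lemma deltaG_pos (hw : ∀ e ∈ G.edgeSet, 0 < w e)
    (hunb : ∃ c : Finset (Sym2 V), IsCycleSet G c ∧ UnbalancedSet w c) : 0 < deltaG G w := by
  obtain ⟨c, hc, f, ht⟩ := hunb
  have := ht.deficitSet_eq (hc.weight_nonneg hw)
  exact (by linarith [ht.2] : 0 < deficitSet w c).trans_le (deficitSet_le_deltaG hc)

/-- Closing a shortest path between the ends of an edge `s(a, b)` by that edge gives a cycle of
deficit `w s(a, b) - d(a, b)`, so `δ(G)` bounds this difference. -/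
lemma sub_deltaG_le_wlen [DecidableRel G.Adj] (hconn : G.Connected)
    (hw : ∀ e ∈ G.edgeSet, 0 < w e) (hδ : 0 ≤ deltaG G w) {a b : V} (hab : G.Adj a b)
    (W : G.Walk a b) : w s(a, b) - deltaG G w ≤ wlen w W := by
  obtain ⟨p, hp, hpl⟩ := exists_isPath_wlen_eq_spDist (w := w) hconn a b
  have hpW : wlen w p ≤ wlen w W := hpl ▸ spDist_le_wlen hw W
  by_contra! hlt
  have hlt' : wlen w p < w s(a, b) := by linarith
  have hdef := deficitSet_le_deltaG (w := w)
    (isCycleSet_insert_of_isPath hab hp (notMem_edges_of_wlen_lt hw hlt'))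
  rw [deficitSet_insert_of_wlen_lt hw hab hp hlt'] at hdef
  linarith

end Cycles

section ClosingPairs

variable [DecidableEq V] {G : SimpleGraph V} {w : Sym2 V → ℝ} {s t : V}

/-- An edge `f` lies in `X` iff `o f` is a closing pair, and in `Y` iff `(o f).swap` is. -/
def IsClosingPair (G : SimpleGraph V) (w : Sym2 V → ℝ) (s t : V) (p : V × V) : Prop :=
  G.Adj p.1 p.2 ∧
    w s(p.1, p.2) = spDist G w p.1 s + w s(s, t) + spDist G w t p.2 + deltaG G w

abbrev ShortestPath (G : SimpleGraph V) (w : Sym2 V → ℝ) (u v : V) : Type _ :=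
  {p : G.Walk u v // p.IsPath ∧ wlen w p = spDist G w u v}

lemma IsClosingPair.weight_eq {a b : V} (hp : IsClosingPair G w s t (a, b)) (hst : G.Adj s t)
    (Q : ShortestPath G w a s) (R : ShortestPath G w t b) :
    w s(a, b) = wlen w (Q.1.append (Walk.cons hst R.1)) + deltaG G w := by
  rw [wlen_append, wlen_cons, Q.2.2, R.2.2, hp.2]
  ring

end ClosingPairs

section Closing

variable [Fintype V] [DecidableEq V] {G : SimpleGraph V} [DecidableRel G.Adj] {w : Sym2 V → ℝ}
  {s t : V}

instance (u v : V) : Finite (ShortestPath G w u v) :=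
  Finite.of_injective (fun p ↦ (⟨p.1, p.2.1⟩ : G.Path u v)) fun _ _ h ↦
    Subtype.ext (congrArg (fun p : G.Path u v ↦ p.1) h)

abbrev ClosingData (G : SimpleGraph V) (w : Sym2 V → ℝ) (s t : V) : Type _ :=
  Σ p : {p : V × V // IsClosingPair G w s t p},
    ShortestPath G w p.1.1 s × ShortestPath G w t p.1.2

/-- A vertex `x` common to `Q` and `R` would give the walk `a ⇝ x ⇝ b`, shorter than
`w s(a, b) - δ(G)`. -/
lemma isPath_append_cons_of_weight_eq (hconn : G.Connected) (hw : ∀ e ∈ G.edgeSet, 0 < w e)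
    (hδ : 0 ≤ deltaG G w) {a b : V} (hab : G.Adj a b) (hst : G.Adj s t) {Q : G.Walk a s}
    {R : G.Walk t b} (hQ : Q.IsPath) (hR : R.IsPath)
    (hlen : w s(a, b) = wlen w Q + w s(s, t) + wlen w R + deltaG G w) :
    (Q.append (Walk.cons hst R)).IsPath := by
  refine hQ.append_cons hR (fun x hxQ hxR ↦ ?_) hst
  have hshort := sub_deltaG_le_wlen hconn hw hδ hab
    ((Q.takeUntil x hxQ).append (R.dropUntil x hxR))
  have hQx : wlen w (Q.takeUntil x hxQ) + wlen w (Q.dropUntil x hxQ) = wlen w Q := by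
    rw [← wlen_append, Walk.take_spec]
  have hRx : wlen w (R.takeUntil x hxR) + wlen w (R.dropUntil x hxR) = wlen w R := by
    rw [← wlen_append, Walk.take_spec]
  have := wlen_nonneg hw (Q.dropUntil x hxQ)
  have := wlen_nonneg hw (R.takeUntil x hxR)
  have := hw _ (G.mem_edgeSet.mpr hst)
  rw [wlen_append] at hshort
  linarith

lemma wlen_eq_spDist_of_weight_eq (hconn : G.Connected) (hw : ∀ e ∈ G.edgeSet, 0 < w e)
    (hδ : 0 ≤ deltaG G w) {a b : V} (hab : G.Adj a b) (hst : G.Adj s t) (Q : G.Walk a s)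
    (R : G.Walk t b) (hlen : w s(a, b) = wlen w Q + w s(s, t) + wlen w R + deltaG G w) :
    wlen w Q = spDist G w a s ∧ wlen w R = spDist G w t b := by
  obtain ⟨Q', -, hQ'⟩ := exists_isPath_wlen_eq_spDist (w := w) hconn a s
  obtain ⟨R', -, hR'⟩ := exists_isPath_wlen_eq_spDist (w := w) hconn t b
  have h₁ := sub_deltaG_le_wlen hconn hw hδ hab (Q'.append (Walk.cons hst R))
  have h₂ := sub_deltaG_le_wlen hconn hw hδ hab (Q.append (Walk.cons hst R'))
  simp only [wlen_append, wlen_cons] at h₁ h₂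
  have := spDist_le_wlen hw Q
  have := spDist_le_wlen hw R
  constructor <;> linarith

lemma IsClosingPair.isPath_append_cons (hconn : G.Connected) (hw : ∀ e ∈ G.edgeSet, 0 < w e)
    (hδ : 0 ≤ deltaG G w) {a b : V} (hp : IsClosingPair G w s t (a, b)) (hst : G.Adj s t)
    (Q : ShortestPath G w a s) (R : ShortestPath G w t b) :
    (Q.1.append (Walk.cons hst R.1)).IsPath :=
  isPath_append_cons_of_weight_eq hconn hw hδ hp.1 hst Q.2.1 R.2.1
    (by rw [Q.2.2, R.2.2]; exact hp.2)

variable (hconn : G.Connected) (hw : ∀ e ∈ G.edgeSet, 0 < w e) (hδ : 0 < deltaG G w)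
  (hst : G.Adj s t)

def toNUCycle (x : ClosingData G w s t) : {c // IsNUCycle G w s(s, t) (deltaG G w) c} :=
  ⟨insert s(x.1.1.1, x.1.1.2) (x.2.1.1.append (Walk.cons hst x.2.2.1)).edges.toFinset,
    isNUCycle_insert_of_isPath hw hδ x.1.2.1
      (x.1.2.isPath_append_cons hconn hw hδ.le hst x.2.1 x.2.2) (by simp)
      (x.1.2.weight_eq hst x.2.1 x.2.2)⟩

lemma toNUCycle_injective : Function.Injective (toNUCycle hconn hw hδ hst) := by
  rintro ⟨⟨⟨a, b⟩, hp⟩, Q, R⟩ ⟨⟨⟨a', b'⟩, hp'⟩, Q', R'⟩ heq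
  have hc : insert s(a, b) (Q.1.append (Walk.cons hst R.1)).edges.toFinset =
      insert s(a', b') (Q'.1.append (Walk.cons hst R'.1)).edges.toFinset :=
    congrArg Subtype.val heq
  have hW := hp.isPath_append_cons hconn hw hδ.le hst Q R
  have hW' := hp'.isPath_append_cons hconn hw hδ.le hst Q' R'
  have hlt : wlen w (Q.1.append (Walk.cons hst R.1)) < w s(a, b) := by
    linarith [hp.weight_eq hst Q R]
  have hlt' : wlen w (Q'.1.append (Walk.cons hst R'.1)) < w s(a', b') := by
    linarith [hp'.weight_eq hst Q' R']
  have hf := mt List.mem_toFinset.mp (notMem_edges_of_wlen_lt hw hlt)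
  have hf' := mt List.mem_toFinset.mp (notMem_edges_of_wlen_lt hw hlt')
  have htop := topOfSet_insert_of_wlen_lt hw hW.isTrail hlt
  rw [hc] at htop
  have hab : s(a, b) = s(a', b') :=
    htop.eq
      ((isCycleSet_insert_of_isPath hp'.1 hW' (notMem_edges_of_wlen_lt hw hlt')).weight_nonneg hw)
      (topOfSet_insert_of_wlen_lt hw hW'.isTrail hlt')
  have hedges : (Q.1.append (Walk.cons hst R.1)).edges.toFinset =
      (Q'.1.append (Walk.cons hst R'.1)).edges.toFinset := by
    rw [← Finset.erase_insert hf, ← Finset.erase_insert hf', hc, hab]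
  rcases Sym2.eq_iff.mp hab with ⟨rfl, rfl⟩ | ⟨rfl, rfl⟩
  · have hWW := hW.eq_of_edges_subset hW' fun f hf ↦
      List.mem_toFinset.mp (hedges ▸ List.mem_toFinset.mpr hf)
    obtain ⟨hQ, hR⟩ := Walk.append_cons_inj_of_isPath hW hWW
    obtain rfl := Subtype.ext hQ
    obtain rfl := Subtype.ext hR
    rfl
  · exact absurd hedges (Walk.edges_toFinset_append_cons_ne hst hW hW')

lemma toNUCycle_surjective : Function.Surjective (toNUCycle hconn hw hδ hst) := by
  rintro ⟨c, hc, ⟨f, htop⟩, he, hnt, hdef⟩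
  induction f using Sym2.ind with | h α β => ?_
  obtain ⟨P, hP, hfP, rfl⟩ := hc.exists_isPath_insert_eq htop.1
  have hlenP : w s(α, β) = wlen w P + deltaG G w := by
    rw [htop.deficitSet_eq (hc.weight_nonneg hw), sum_erase_insert_edges_eq_wlen hP.isTrail hfP]
      at hdef
    linarith
  have heP : s(s, t) ∈ P.edges := by
    rcases Finset.mem_insert.mp he with h | h
    · exact absurd (h ▸ htop) hnt
    · exact List.mem_toFinset.mp h
  obtain ⟨a, b, Q, R, hab, hW, hWP⟩ := hP.exists_append_cons hst heP
  have hWlen : wlen w (Q.append (Walk.cons hst R)) = wlen w P := by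
    rw [← hW.isTrail.sum_edges_toFinset_eq_wlen, hWP, hP.isTrail.sum_edges_toFinset_eq_wlen]
  have hadj : G.Adj a b := G.mem_edgeSet.mp (hab ▸ hc.subset_edgeSet _ htop.1)
  have hlen : w s(a, b) = wlen w Q + w s(s, t) + wlen w R + deltaG G w := by
    rw [hab, hlenP, ← hWlen, wlen_append, wlen_cons]
    ring
  obtain ⟨hQ, hR⟩ := wlen_eq_spDist_of_weight_eq hconn hw hδ.le hadj hst Q R hlen
  have hclosing : IsClosingPair G w s t (a, b) := ⟨hadj, by rw [← hQ, ← hR]; exact hlen⟩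
  refine ⟨⟨⟨(a, b), hclosing⟩, ⟨Q, hW.of_append_left, hQ⟩,
    ⟨R, hW.of_append_right.of_cons, hR⟩⟩, Subtype.ext ?_⟩
  change insert s(a, b) (Q.append (Walk.cons hst R)).edges.toFinset = _
  rw [hab, hWP]

end Closing

section Counting

variable [Fintype V] [DecidableEq V] {G : SimpleGraph V} [DecidableRel G.Adj]

lemma card_closingData (w : Sym2 V → ℝ) (s t : V) [DecidablePred (IsClosingPair G w s t)] :
    Nat.card (ClosingData G w s t) =
      ∑ p ∈ Finset.univ.filter (IsClosingPair G w s t), csp G w p.1 s * csp G w t p.2 := by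
  rw [Nat.card_sigma, Finset.sum_subtype _ fun p ↦ Finset.mem_filter_univ p]
  simp only [Nat.card_prod]
  rfl

variable {M : Type*} [AddCommMonoid M] {o : Sym2 V → V × V}

/-- Every edge `f` is reached by exactly the two oriented pairs `o f` and `(o f).swap`. -/
lemma sum_adj_eq_sum_edgeFinset (ho : ∀ e ∈ G.edgeSet, s((o e).1, (o e).2) = e)
    (g : V × V → M) :
    ∑ p ∈ Finset.univ.filter (fun p : V × V ↦ G.Adj p.1 p.2), g p =
      ∑ f ∈ G.edgeFinset, (g (o f) + g (o f).swap) := by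
  rw [← Finset.sum_fiberwise_of_maps_to (g := fun p : V × V ↦ s(p.1, p.2)) (t := G.edgeFinset)
    (fun p hp ↦ by simpa using (Finset.mem_filter.mp hp).2)]
  refine Finset.sum_congr rfl fun f hf ↦ ?_
  have hof := ho f (mem_edgeFinset.mp hf)
  generalize o f = q at hof ⊢
  obtain ⟨a, b⟩ := q
  subst hof
  have hadj : G.Adj a b := mem_edgeFinset.mp hf
  have hfiber :
      {p ∈ Finset.univ.filter (fun p : V × V ↦ G.Adj p.1 p.2) | s(p.1, p.2) = s(a, b)} =
        {(a, b), (b, a)} := by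
    ext ⟨x, y⟩
    simp only [Finset.mem_filter, Finset.mem_univ, true_and, Finset.mem_insert,
      Finset.mem_singleton, Sym2.eq_iff, Prod.mk.injEq]
    constructor
    · exact fun h ↦ h.2
    · rintro (⟨rfl, rfl⟩ | ⟨rfl, rfl⟩)
      · exact ⟨hadj, Or.inl ⟨rfl, rfl⟩⟩
      · exact ⟨hadj.symm, Or.inr ⟨rfl, rfl⟩⟩
  rw [hfiber, Finset.sum_pair fun h ↦ hadj.ne (Prod.ext_iff.mp h).1]
  rfl

lemma sum_filter_eq_sum_edgeFinset_filter (ho : ∀ e ∈ G.edgeSet, s((o e).1, (o e).2) = e)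
    {Q P : V × V → Prop} [DecidablePred Q] [DecidablePred P]
    (hQ : ∀ p, Q p ↔ G.Adj p.1 p.2 ∧ P p) (g : V × V → M) :
    ∑ p ∈ Finset.univ.filter Q, g p =
      ∑ f ∈ G.edgeFinset.filter (fun f ↦ P (o f)), g (o f) +
        ∑ f ∈ G.edgeFinset.filter (fun f ↦ P (o f).swap), g (o f).swap := by
  rw [Finset.filter_congr fun p _ ↦ hQ p, ← Finset.filter_filter, Finset.sum_filter,
    sum_adj_eq_sum_edgeFinset ho, Finset.sum_filter, Finset.sum_filter, ← Finset.sum_add_distrib]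

end Counting

/-- The counting formula for `N_U(e, δ(G))`: given an arbitrary orientation `o`
of the edges, with
`X = { f=(α,β) ∈ E : w(f) = d(α,s) + w(e) + d(t,β) + δ(G) }` and
`Y = { f=(α,β) ∈ E : w(f) = d(β,s) + w(e) + d(t,α) + δ(G) }`,
`N_U(e, δ(G)) = Σ_{(α,β)∈X} csp(α,s)·csp(t,β) + Σ_{(α,β)∈Y} csp(β,s)·csp(t,α)`. -/
theorem stmt16 [Fintype V] [DecidableEq V] (G : SimpleGraph V) [DecidableRel G.Adj]
    (hconn : G.Connected) (w : Sym2 V → ℝ) (hw : ∀ e ∈ G.edgeSet, 0 < w e)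
    (hunb : ∃ c : Finset (Sym2 V), IsCycleSet G c ∧ UnbalancedSet w c)
    (o : Sym2 V → V × V) (ho : ∀ e ∈ G.edgeSet, s((o e).1, (o e).2) = e)
    (s t : V) (hst : G.Adj s t) :
    NU G w s(s, t) (deltaG G w) =
      (∑ f ∈ G.edgeFinset.filter (fun f => w f =
          spDist G w (o f).1 s + w s(s, t) + spDist G w t (o f).2 + deltaG G w),
        csp G w (o f).1 s * csp G w t (o f).2) +
      (∑ f ∈ G.edgeFinset.filter (fun f => w f =
          spDist G w (o f).2 s + w s(s, t) + spDist G w t (o f).1 + deltaG G w),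
        csp G w (o f).2 s * csp G w t (o f).1) := by
  classical
  have hδ := deltaG_pos hw hunb
  calc NU G w s(s, t) (deltaG G w) = Nat.card (ClosingData G w s t) :=
        (Nat.card_eq_of_bijective _
          ⟨toNUCycle_injective hconn hw hδ hst, toNUCycle_surjective hconn hw hδ hst⟩).symm
    _ = ∑ p ∈ Finset.univ.filter (IsClosingPair G w s t), csp G w p.1 s * csp G w t p.2 :=
        card_closingData w s t
    _ = _ := by
        rw [sum_filter_eq_sum_edgeFinset_filter (Q := IsClosingPair G w s t) ho fun _ ↦ Iff.rfl]
        congr 1 <;> refine Finset.sum_congr (Finset.filter_congr fun f hf ↦ ?_) fun _ _ ↦ rfl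
        · rw [ho f (mem_edgeFinset.mp hf)]
        · rw [Prod.fst_swap, Prod.snd_swap, Sym2.eq_swap, ho f (mem_edgeFinset.mp hf)]
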